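/- Let A : [0,1]² → ℝ be C² with ∂²A/∂x∂y > 0 everywhere, m = max_{ν∈M} ∫A dν, and let ν be a maximizing measure in M. Then ν is supported on a graph: for each x ∈ [0,1] there is at most one y with (x,y) ∈ supp(ν). -/

import Mathlib

open MeasureTheory unitInterval

def measSupp {X : Type*} [TopologicalSpace X] [MeasurableSpace X]
    (ν : Measure X) : Set X := {p | ∀ U : Set X, IsOpen U → p ∈ U → 0 < ν U}

open Set Filter Topology

/-!
Exchanging mass between two support points `(x₁, y₁)`, `(x₂, y₂)` of `ν` with `x₁ < x₂` and
`y₂ < y₁` — replacing small equal-mass pieces of `ν` near them by the products of their marginals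
with the second coordinates exchanged — keeps both marginals, hence holonomy, and by the twist
condition strictly increases `∫ A`. So the support of a maximizing measure is monotone. A measure
with equal marginals and monotone support lives on the diagonal: if a support point `p` has
`p.1 < t < p.2`, the mass moved from below `t` to above `t` is positive, and the equal mass moved
back down yields a support point `q` with `q.2 < t ≤ q.1`, which is out of order with `p`.
-/

lemma measSupp_eq_support {X : Type*} [TopologicalSpace X] [MeasurableSpace X]
    (ν : Measure X) : measSupp ν = ν.support := by
  ext p
  rw [Measure.support_eq_forall_isOpen]
  exact forall_congr' fun U => ⟨fun h hp hU => h hU hp, fun h hU hp => h hp hU⟩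

lemma integrable_of_norm_le {Z : Type*} [MeasurableSpace Z] {f : Z → ℝ} (hf : Measurable f)
    {C : ℝ} (hC : ∀ z, ‖f z‖ ≤ C) (μ : Measure Z) [IsFiniteMeasure μ] : Integrable f μ :=
  .of_bound hf.aestronglyMeasurable C (ae_of_all _ hC)

lemma integral_lt_integral_of_ae_lt {Z : Type*} [MeasurableSpace Z] {μ : Measure Z}
    {f g : Z → ℝ} (hf : Integrable f μ) (hg : Integrable g μ) (hfg : ∀ᵐ z ∂μ, f z < g z)
    (hμ : μ ≠ 0) : ∫ z, f z ∂μ < ∫ z, g z ∂μ := by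
  rw [← sub_pos, ← integral_sub hg hf,
    integral_pos_iff_support_of_nonneg_ae (hfg.mono fun z h => (sub_pos.2 h).le) (hg.sub hf)]
  refine (Measure.measure_univ_pos.2 hμ).trans_le (measure_mono_ae ?_)
  filter_upwards [hfg] with z hz _
  exact (sub_pos.2 hz).ne'

section Exchange

variable {X Y : Type*} [MeasurableSpace X] [MeasurableSpace Y]

noncomputable def exchangeMeasure (μ₁ μ₂ : Measure (X × Y)) : Measure (X × Y) :=
  (μ₁ univ)⁻¹ • ((μ₁.map Prod.fst).prod (μ₂.map Prod.snd) +
    (μ₂.map Prod.fst).prod (μ₁.map Prod.snd))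

variable {μ₁ μ₂ : Measure (X × Y)} [IsFiniteMeasure μ₁] [IsFiniteMeasure μ₂]

lemma map_fst_exchangeMeasure (hmass : μ₁ univ = μ₂ univ) (hne : μ₁ ≠ 0) :
    (exchangeMeasure μ₁ μ₂).map Prod.fst = (μ₁ + μ₂).map Prod.fst := by
  rw [exchangeMeasure, Measure.map_smul, Measure.map_add _ _ measurable_fst,
    Measure.map_fst_prod, Measure.map_fst_prod, Measure.map_apply measurable_snd .univ,
    Measure.map_apply measurable_snd .univ, preimage_univ, ← hmass, ← smul_add, smul_smul,
    ENNReal.inv_mul_cancel (Measure.measure_univ_ne_zero.2 hne) (measure_ne_top _ _), one_smul,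
    Measure.map_add _ _ measurable_fst]

lemma map_snd_exchangeMeasure (hmass : μ₁ univ = μ₂ univ) (hne : μ₁ ≠ 0) :
    (exchangeMeasure μ₁ μ₂).map Prod.snd = (μ₁ + μ₂).map Prod.snd := by
  rw [exchangeMeasure, Measure.map_smul, Measure.map_add _ _ measurable_snd,
    Measure.map_snd_prod, Measure.map_snd_prod, Measure.map_apply measurable_fst .univ,
    Measure.map_apply measurable_fst .univ, preimage_univ, ← hmass, ← smul_add, smul_smul,
    ENNReal.inv_mul_cancel (Measure.measure_univ_ne_zero.2 hne) (measure_ne_top _ _), one_smul,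
    Measure.map_add _ _ measurable_snd, add_comm]

lemma integral_exchangeMeasure {F : X × Y → ℝ} (hFm : Measurable F) {C : ℝ} (hFC : ∀ p, ‖F p‖ ≤ C) :
    ∫ p, F p ∂(exchangeMeasure μ₁ μ₂) = (μ₁.real univ)⁻¹ *
      ∫ pq, (F (pq.1.1, pq.2.2) + F (pq.2.1, pq.1.2)) ∂(μ₁.prod μ₂) := by
  have hint := integrable_of_norm_le hFm hFC
  rw [exchangeMeasure, integral_smul_measure, integral_add_measure (hint _) (hint _),
    Measure.map_prod_map _ _ measurable_fst measurable_snd,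
    Measure.map_prod_map _ _ measurable_fst measurable_snd,
    integral_map (by fun_prop) hFm.aestronglyMeasurable,
    integral_map (by fun_prop) hFm.aestronglyMeasurable,
    ← integral_prod_swap (μ := μ₂), integral_add]
  · rw [ENNReal.toReal_inv, smul_eq_mul]; rfl
  · exact integrable_of_norm_le (hFm.comp (by fun_prop)) (fun _ => hFC _) _
  · exact integrable_of_norm_le (hFm.comp (by fun_prop)) (fun _ => hFC _) _

lemma integral_add_lt_integral_exchangeMeasure (hmass : μ₁ univ = μ₂ univ) (hne : μ₁ ≠ 0)
    {F : X × Y → ℝ} (hFm : Measurable F) {C : ℝ} (hFC : ∀ p, ‖F p‖ ≤ C)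
    (hF : ∀ᵐ pq ∂μ₁.prod μ₂, F pq.1 + F pq.2 < F (pq.1.1, pq.2.2) + F (pq.2.1, pq.1.2)) :
    ∫ p, F p ∂μ₁ + ∫ p, F p ∂μ₂ < ∫ p, F p ∂(exchangeMeasure μ₁ μ₂) := by
  have hint : ∀ g : (X × Y) × (X × Y) → X × Y, Measurable g →
      Integrable (fun pq => F (g pq)) (μ₁.prod μ₂) :=
    fun g hg => integrable_of_norm_le (hFm.comp hg) (fun _ => hFC _) _
  have hc : 0 < μ₁.real univ :=
    ENNReal.toReal_pos (Measure.measure_univ_ne_zero.2 hne) (measure_ne_top _ _)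
  have hsplit : ∫ pq, (F pq.1 + F pq.2) ∂(μ₁.prod μ₂) =
      μ₁.real univ * (∫ p, F p ∂μ₁ + ∫ p, F p ∂μ₂) := by
    rw [integral_add (hint _ measurable_fst) (hint _ measurable_snd), integral_fun_fst,
      integral_fun_snd, measureReal_def, measureReal_def, ← hmass, smul_eq_mul, smul_eq_mul,
      mul_add]
  have hprod : μ₁.prod μ₂ ≠ 0 := by
    rw [← Measure.measure_univ_ne_zero, ← univ_prod_univ, Measure.prod_prod, ← hmass]
    exact mul_ne_zero (Measure.measure_univ_ne_zero.2 hne) (Measure.measure_univ_ne_zero.2 hne)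
  have hlt : ∫ pq, (F pq.1 + F pq.2) ∂(μ₁.prod μ₂) <
      ∫ pq, (F (pq.1.1, pq.2.2) + F (pq.2.1, pq.1.2)) ∂(μ₁.prod μ₂) :=
    integral_lt_integral_of_ae_lt ((hint _ measurable_fst).add (hint _ measurable_snd))
      ((hint _ (by fun_prop)).add (hint _ (by fun_prop))) hF hprod
  rw [integral_exchangeMeasure hFm hFC, lt_inv_mul_iff₀ hc, ← hsplit]
  exact hlt

lemma isFiniteMeasure_exchangeMeasure (hmass : μ₁ univ = μ₂ univ) (hne : μ₁ ≠ 0) :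
    IsFiniteMeasure (exchangeMeasure μ₁ μ₂) := by
  constructor
  rw [← preimage_univ (f := Prod.fst), ← Measure.map_apply measurable_fst .univ,
    map_fst_exchangeMeasure hmass hne]
  exact measure_lt_top _ _

lemma exists_map_eq_integral_lt_of_add_le (μ : Measure (X × Y)) [IsFiniteMeasure μ]
    (hle : μ₁ + μ₂ ≤ μ) (hmass : μ₁ univ = μ₂ univ) (hne : μ₁ ≠ 0)
    {F : X × Y → ℝ} (hFm : Measurable F) {C : ℝ} (hFC : ∀ p, ‖F p‖ ≤ C)
    (hF : ∀ᵐ pq ∂μ₁.prod μ₂, F pq.1 + F pq.2 < F (pq.1.1, pq.2.2) + F (pq.2.1, pq.1.2)) :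
    ∃ ν : Measure (X × Y), ν.map Prod.fst = μ.map Prod.fst ∧ ν.map Prod.snd = μ.map Prod.snd ∧
      ∫ p, F p ∂μ < ∫ p, F p ∂ν := by
  have := isFiniteMeasure_exchangeMeasure hmass hne
  have hint := integrable_of_norm_le hFm hFC
  have hμ := Measure.sub_add_cancel_of_le hle
  refine ⟨μ - (μ₁ + μ₂) + exchangeMeasure μ₁ μ₂, ?_, ?_, ?_⟩
  · conv_rhs => rw [← hμ]
    rw [Measure.map_add _ _ measurable_fst, Measure.map_add _ _ measurable_fst,
      map_fst_exchangeMeasure hmass hne]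
  · conv_rhs => rw [← hμ]
    rw [Measure.map_add _ _ measurable_snd, Measure.map_add _ _ measurable_snd,
      map_snd_exchangeMeasure hmass hne]
  · conv_lhs => rw [← hμ]
    rw [integral_add_measure (hint _) (hint _), integral_add_measure (hint _) (hint _),
      integral_add_measure (hint _) (hint _)]
    linarith [integral_add_lt_integral_exchangeMeasure hmass hne hFm hFC hF]

end Exchange

lemma exists_map_eq_integral_lt {X Y : Type*} [MeasurableSpace X] [MeasurableSpace Y]
    (μ : Measure (X × Y)) [IsFiniteMeasure μ]
    {F : X × Y → ℝ} (hFm : Measurable F) {C : ℝ} (hFC : ∀ p, ‖F p‖ ≤ C)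
    {R₁ R₂ : Set (X × Y)} (hR₁ : MeasurableSet R₁) (hR₂ : MeasurableSet R₂)
    (hdisj : Disjoint R₁ R₂) (h₁ : μ R₁ ≠ 0) (h₂ : μ R₂ ≠ 0)
    (hF : ∀ p ∈ R₁, ∀ q ∈ R₂, F p + F q < F (p.1, q.2) + F (q.1, p.2)) :
    ∃ ν : Measure (X × Y), ν.map Prod.fst = μ.map Prod.fst ∧ ν.map Prod.snd = μ.map Prod.snd ∧
      ∫ p, F p ∂μ < ∫ p, F p ∂ν := by
  set c := min (μ R₁) (μ R₂)
  have hpiece : ∀ R, μ R ≠ 0 → c ≤ μ R →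
      (c / μ R) • μ.restrict R ≤ μ.restrict R ∧ ((c / μ R) • μ.restrict R) univ = c := by
    intro R hR hcR
    have hdiv : c / μ R ≤ 1 := ENNReal.div_le_of_le_mul (by rwa [one_mul])
    refine ⟨fun s => ?_, ?_⟩
    · rw [Measure.smul_apply, smul_eq_mul]
      exact mul_le_of_le_one_left zero_le hdiv
    · rw [Measure.smul_apply, Measure.restrict_apply_univ, smul_eq_mul,
        ENNReal.div_mul_cancel hR (measure_ne_top _ _)]
  obtain ⟨hle₁, hmass₁⟩ := hpiece R₁ h₁ (min_le_left _ _)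
  obtain ⟨hle₂, hmass₂⟩ := hpiece R₂ h₂ (min_le_right _ _)
  have : IsFiniteMeasure ((c / μ R₁) • μ.restrict R₁) := isFiniteMeasure_of_le _ hle₁
  have : IsFiniteMeasure ((c / μ R₂) • μ.restrict R₂) := isFiniteMeasure_of_le _ hle₂
  refine exists_map_eq_integral_lt_of_add_le μ ?_ (hmass₁.trans hmass₂.symm) ?_ hFm hFC ?_
  · calc _ ≤ μ.restrict R₁ + μ.restrict R₂ := add_le_add hle₁ hle₂
      _ = μ.restrict (R₁ ∪ R₂) := (Measure.restrict_union hdisj hR₂).symm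
      _ ≤ μ := Measure.restrict_le_self
  · rw [← Measure.measure_univ_ne_zero, hmass₁]
    exact (lt_min (pos_iff_ne_zero.2 h₁) (pos_iff_ne_zero.2 h₂)).ne'
  · have hmem : ∀ R, MeasurableSet R → ∀ᵐ p ∂((c / μ R) • μ.restrict R), p ∈ R :=
      fun R hR => Measure.ae_smul_measure (ae_restrict_mem hR) _
    filter_upwards [(Measure.ae_prod_mem_iff_ae_ae_mem (hR₁.prod hR₂)).2
      (by filter_upwards [hmem R₁ hR₁] with p hp
          filter_upwards [hmem R₂ hR₂] with q hq using ⟨hp, hq⟩)] with pq hpq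
    exact hF pq.1 hpq.1 pq.2 hpq.2

lemma snd_le_snd_of_mem_support {α β : Type*}
    [LinearOrder α] [TopologicalSpace α] [OrderTopology α] [DenselyOrdered α]
    [MeasurableSpace α] [OpensMeasurableSpace α]
    [LinearOrder β] [TopologicalSpace β] [OrderTopology β] [DenselyOrdered β]
    [MeasurableSpace β] [OpensMeasurableSpace β]
    (μ : Measure (α × β)) [IsFiniteMeasure μ]
    {F : α × β → ℝ} (hFm : Measurable F) {C : ℝ} (hFC : ∀ p, ‖F p‖ ≤ C)
    (hF : ∀ x₁ x₂ y₁ y₂, x₁ < x₂ → y₂ < y₁ → F (x₁, y₁) + F (x₂, y₂) < F (x₁, y₂) + F (x₂, y₁))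
    (hmax : ∀ ν : Measure (α × β), ν.map Prod.fst = μ.map Prod.fst →
      ν.map Prod.snd = μ.map Prod.snd → ∫ p, F p ∂ν ≤ ∫ p, F p ∂μ)
    {p q : α × β} (hp : p ∈ μ.support) (hq : q ∈ μ.support) (hpq : p.1 < q.1) :
    p.2 ≤ q.2 := by
  by_contra! hqp
  obtain ⟨s, hps, hsq⟩ := exists_between hpq
  obtain ⟨t, hqt, htp⟩ := exists_between hqp
  have hR₁ : μ (Iio s ×ˢ Ioi t) ≠ 0 :=
    ((Measure.mem_support_iff_forall p).1 hp _
      (prod_mem_nhds (Iio_mem_nhds hps) (Ioi_mem_nhds htp))).ne'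
  have hR₂ : μ (Ioi s ×ˢ Iio t) ≠ 0 :=
    ((Measure.mem_support_iff_forall q).1 hq _
      (prod_mem_nhds (Ioi_mem_nhds hsq) (Iio_mem_nhds hqt))).ne'
  obtain ⟨ν, hfst, hsnd, hlt⟩ := exists_map_eq_integral_lt μ hFm hFC
    (measurableSet_Iio.prod measurableSet_Ioi) (measurableSet_Ioi.prod measurableSet_Iio)
    (disjoint_prod.2 (Or.inl Iio_disjoint_Ioi_same)) hR₁ hR₂
    (fun a ha b hb => hF a.1 b.1 a.2 b.2 (ha.1.trans hb.1) (hb.2.trans ha.2))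
  exact (hlt.trans_le (hmax ν hfst hsnd)).false

lemma measure_prod_compl_eq_of_map_fst_eq_map_snd {X : Type*} [MeasurableSpace X]
    {μ : Measure (X × X)} [IsFiniteMeasure μ] (h : μ.map Prod.fst = μ.map Prod.snd)
    {S : Set X} (hS : MeasurableSet S) : μ (S ×ˢ Sᶜ) = μ (Sᶜ ×ˢ S) := by
  have hmarg : μ (Prod.fst ⁻¹' S) = μ (Prod.snd ⁻¹' S) := by
    rw [← Measure.map_apply measurable_fst hS, ← Measure.map_apply measurable_snd hS, h]
  rw [← measure_inter_add_sdiff (Prod.fst ⁻¹' S) (measurable_snd hS),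
    ← measure_inter_add_sdiff (Prod.snd ⁻¹' S) (measurable_fst hS), inter_comm] at hmarg
  have hswap : Sᶜ ×ˢ S = Prod.snd ⁻¹' S \ Prod.fst ⁻¹' S := by ext; simp [and_comm]
  rw [hswap]
  exact (ENNReal.add_right_inj (measure_ne_top _ _)).1 hmarg

lemma exists_mem_support_compl_prod {X : Type*} [TopologicalSpace X] [MeasurableSpace X]
    [HereditarilyLindelofSpace (X × X)] {μ : Measure (X × X)}
    [IsFiniteMeasure μ] (h : μ.map Prod.fst = μ.map Prod.snd) {S : Set X}
    (hS : MeasurableSet S) {p : X × X} (hp : p ∈ μ.support) (hpS : S ×ˢ Sᶜ ∈ 𝓝 p) :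
    ∃ q ∈ μ.support, q ∈ Sᶜ ×ˢ S := by
  have hpos : 0 < μ (Sᶜ ×ˢ S) := by
    rw [← measure_prod_compl_eq_of_map_fst_eq_map_snd h hS]
    exact (Measure.mem_support_iff_forall p).1 hp _ hpS
  obtain ⟨q, hqS, hq⟩ := Measure.nonempty_inter_support_of_pos hpos
  exact ⟨q, hq, hqS⟩

section LinearOrder

variable {α : Type*} [LinearOrder α] [TopologicalSpace α] [OrderTopology α] [DenselyOrdered α]
  [MeasurableSpace α] [OpensMeasurableSpace α]

lemma fst_eq_snd_of_mem_support [SecondCountableTopology α] {μ : Measure (α × α)}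
    [IsFiniteMeasure μ] (h : μ.map Prod.fst = μ.map Prod.snd)
    (hmono : ∀ p ∈ μ.support, ∀ q ∈ μ.support, p.1 < q.1 → p.2 ≤ q.2)
    {p : α × α} (hp : p ∈ μ.support) : p.1 = p.2 := by
  rcases lt_trichotomy p.1 p.2 with hlt | heq | hgt
  · obtain ⟨t, ht₁, ht₂⟩ := exists_between hlt
    have hnhds : Iio t ×ˢ (Iio t)ᶜ ∈ 𝓝 p :=
      mem_of_superset (prod_mem_nhds (Iio_mem_nhds ht₁) (Ioi_mem_nhds ht₂))
        (prod_mono subset_rfl fun _ hx => not_lt.2 (le_of_lt hx))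
    obtain ⟨q, hq, hq₁, hq₂⟩ :=
      exists_mem_support_compl_prod h measurableSet_Iio hp hnhds
    have hpq := hmono p hp q hq (ht₁.trans_le (not_lt.1 hq₁))
    exact (lt_irrefl _ ((hpq.trans_lt hq₂).trans ht₂)).elim
  · exact heq
  · obtain ⟨t, ht₁, ht₂⟩ := exists_between hgt
    have hnhds : Ioi t ×ˢ (Ioi t)ᶜ ∈ 𝓝 p :=
      mem_of_superset (prod_mem_nhds (Ioi_mem_nhds ht₂) (Iio_mem_nhds ht₁))
        (prod_mono subset_rfl fun _ hx => not_lt.2 (le_of_lt hx))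
    obtain ⟨q, hq, hq₁, hq₂⟩ :=
      exists_mem_support_compl_prod h measurableSet_Ioi hp hnhds
    have hqp := hmono q hq p hp ((not_lt.1 hq₁).trans_lt ht₂)
    exact (lt_irrefl _ ((hqp.trans_lt ht₁).trans hq₂)).elim

end LinearOrder

section Holonomic

variable {X : Type*} [TopologicalSpace X] [CompactSpace X] [MeasurableSpace X]
  [OpensMeasurableSpace X]

lemma integral_sub_eq_integral_map_fst_sub (μ : Measure (X × X)) [IsFiniteMeasure μ]
    (f : C(X, ℝ)) :
    ∫ p, (f p.1 - f p.2) ∂μ = ∫ x, f x ∂(μ.map Prod.fst) - ∫ x, f x ∂(μ.map Prod.snd) := by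
  have hf : ∀ (ν : Measure X) [IsFiniteMeasure ν], Integrable f ν :=
    fun ν _ => (BoundedContinuousFunction.mkOfCompact f).integrable ν
  rw [integral_map measurable_fst.aemeasurable f.continuous.aestronglyMeasurable,
    integral_map measurable_snd.aemeasurable f.continuous.aestronglyMeasurable]
  exact integral_sub ((hf _).comp_measurable measurable_fst)
    ((hf _).comp_measurable measurable_snd)

lemma forall_integral_sub_eq_zero_iff [BorelSpace X] [HasOuterApproxClosed X]
    (μ : Measure (X × X)) [IsFiniteMeasure μ] :
    (∀ f : C(X, ℝ), ∫ p, (f p.1 - f p.2) ∂μ = 0) ↔ μ.map Prod.fst = μ.map Prod.snd := by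
  simp_rw [integral_sub_eq_integral_map_fst_sub, sub_eq_zero]
  refine ⟨fun h => ext_of_forall_integral_eq_of_IsFiniteMeasure fun f => h f, fun h f => by rw [h]⟩

end Holonomic

lemma contDiff_deriv_fst {A : ℝ → ℝ → ℝ} {n : ℕ∞} (hA : ContDiff ℝ (n + 1) (Function.uncurry A)) :
    ContDiff ℝ n (fun p : ℝ × ℝ => deriv (fun x => A x p.2) p.1) := by
  have h : ContDiff ℝ (n + 1) (Function.uncurry fun (p : ℝ × ℝ) (x : ℝ) => A x p.2) :=
    hA.comp (contDiff_snd.prodMk (contDiff_snd.comp contDiff_fst))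
  exact (h.fderiv contDiff_fst le_rfl).clm_apply contDiff_const

lemma add_lt_add_of_deriv_deriv_pos {A : ℝ → ℝ → ℝ} (hA : ContDiff ℝ 2 (Function.uncurry A))
    {s t : Set ℝ} (hs : Convex ℝ s) (ht : Convex ℝ t)
    (htwist : ∀ x ∈ s, ∀ y ∈ t, 0 < deriv (fun y' => deriv (fun x' => A x' y') x) y)
    {x₁ x₂ y₁ y₂ : ℝ} (hx₁ : x₁ ∈ s) (hx₂ : x₂ ∈ s) (hy₁ : y₁ ∈ t) (hy₂ : y₂ ∈ t)
    (hx : x₁ < x₂) (hy : y₂ < y₁) :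
    A x₁ y₁ + A x₂ y₂ < A x₁ y₂ + A x₂ y₁ := by
  have hA₁ : ContDiff ℝ 1 (fun p : ℝ × ℝ => deriv (fun x => A x p.2) p.1) :=
    contDiff_deriv_fst hA
  have hpartial : ∀ x y, HasDerivAt (fun x' => A x' y) (deriv (fun x' => A x' y) x) x :=
    fun x y => ((hA.comp (contDiff_id.prodMk contDiff_const)).differentiable
      two_ne_zero x).hasDerivAt
  have hmono : ∀ x ∈ s, StrictMonoOn (fun y => deriv (fun x' => A x' y) x) t := by
    intro x hx
    have hd : Differentiable ℝ (fun y => deriv (fun x' => A x' y) x) :=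
      (hA₁.comp (contDiff_const.prodMk contDiff_id)).differentiable one_ne_zero
    exact strictMonoOn_of_deriv_pos ht hd.continuous.continuousOn
      fun y hy => htwist x hx y (interior_subset hy)
  have hgap_deriv : ∀ x, HasDerivAt (fun x => A x y₁ - A x y₂)
      (deriv (fun x' => A x' y₁) x - deriv (fun x' => A x' y₂) x) x :=
    fun x => (hpartial x y₁).sub (hpartial x y₂)
  have hgap : StrictMonoOn (fun x => A x y₁ - A x y₂) s := by
    refine strictMonoOn_of_deriv_pos hs (HasDerivAt.continuousOn fun x _ => hgap_deriv x)
      fun x hx => ?_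
    rw [(hgap_deriv x).deriv]
    exact sub_pos.2 (hmono x (interior_subset hx) hy₂ hy₁ hy)
  linarith [hgap hx₁ hx₂ hx]

/-- if A is C² with ∂²A/∂x∂y > 0 and ν ∈ M is a maximizing measure,
then supp ν is a graph: for each x there is at most one y with (x,y) ∈ supp ν. -/
theorem stmt14 (A : ℝ → ℝ → ℝ) (hA : ContDiff ℝ 2 (Function.uncurry A))
    (htwist : ∀ x ∈ Set.Icc (0:ℝ) 1, ∀ y ∈ Set.Icc (0:ℝ) 1,
      0 < deriv (fun y' => deriv (fun x' => A x' y') x) y)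
    (m : ℝ) (ν : ProbabilityMeasure (I × I))
    (hν : ∀ f : C(I, ℝ), ∫ p, (f p.1 - f p.2) ∂(ν : Measure (I × I)) = 0)
    (hmax : ∀ ν' : ProbabilityMeasure (I × I),
      (∀ f : C(I, ℝ), ∫ p, (f p.1 - f p.2) ∂(ν' : Measure (I × I)) = 0) →
      ∫ p, A p.1 p.2 ∂(ν' : Measure (I × I)) ≤ m)
    (hm : ∫ p, A p.1 p.2 ∂(ν : Measure (I × I)) = m) :
    ∀ x y y' : I, (x, y) ∈ measSupp (ν : Measure (I × I)) →
      (x, y') ∈ measSupp (ν : Measure (I × I)) → y = y' := by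
  set μ : Measure (I × I) := (ν : Measure (I × I))
  have hbal : μ.map Prod.fst = μ.map Prod.snd := (forall_integral_sub_eq_zero_iff μ).1 hν
  have hFc : Continuous fun p : I × I => A p.1 p.2 :=
    hA.continuous.comp (f := fun p : I × I => ((p.1 : ℝ), (p.2 : ℝ))) (by fun_prop)
  obtain ⟨C, hC⟩ := isCompact_univ.exists_bound_of_continuousOn hFc.continuousOn
  have hmono : ∀ p ∈ μ.support, ∀ q ∈ μ.support, p.1 < q.1 → p.2 ≤ q.2 := by
    refine fun p hp q hq => snd_le_snd_of_mem_support μ hFc.measurable (fun p => hC p trivial)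
      (fun x₁ x₂ y₁ y₂ hx hy => add_lt_add_of_deriv_deriv_pos hA (convex_Icc 0 1)
        (convex_Icc 0 1) htwist x₁.2 x₂.2 y₁.2 y₂.2 hx hy) (fun ν' hfst hsnd => ?_) hp hq
    have : IsProbabilityMeasure (ν'.map Prod.fst) := by
      rw [hfst]; exact Measure.isProbabilityMeasure_map measurable_fst.aemeasurable
    have := Measure.isProbabilityMeasure_of_map (μ := ν') Prod.fst
    exact hm ▸ hmax ⟨ν', this⟩
      ((forall_integral_sub_eq_zero_iff ν').2 (hfst.trans (hbal.trans hsnd.symm)))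
  intro x y y' hy hy'
  rw [measSupp_eq_support] at hy hy'
  exact (fst_eq_snd_of_mem_support hbal hmono hy).symm.trans
    (fst_eq_snd_of_mem_support hbal hmono hy')
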